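/- arXiv:2503.21175 — 9 statements merged into one kernel-verified Lean document; each statement's English description precedes it below -/
import Mathlib

section
/- Let p_m < p_s, k > 0, h ∈ (0,1) with h(p_s−p_m) > k, and let μ ∈ (0,1) satisfy μ > μ₂* := h k / (h k + (1−h)(h(p_s−p_m) − k)). Define T̄_m := 1 − (1−μ)hk / (μ(h(p_s−p_m) − k)). Then: (i) h < T̄_m < 1; (ii) T̄_m solves the mixed-strategy indifference equation k·((1−μ)h + μ(1−T̄_m)) = μ·(1−T̄_m)·h·(p_s−p_m); and (iii) T_{m1}* := 1 − (1−μ)hk / (μ(1−h)(h(p_s−p_m) − k)) lies in (0,1) and satisfies T̄_m = h + (1−h)·T_{m1}*. (This verifies the partial-overtreatment/full-undertreatment (POFU) equilibrium mixing probability of Proposition 1(ii).) -/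
/-- Verification of the POFU-equilibrium mixing probability (Proposition 1(ii)):
when `μ > μ₂*`, the expected truthful-minor probability
`T̄_m = 1 − (1−μ)hk/(μ(h(p_s−p_m)−k))` lies in `(h,1)`, solves the consumer's
mixed-strategy indifference equation, and corresponds to an opportunistic
strategy `T_{m1}* ∈ (0,1)` via `T̄_m = h + (1−h)T_{m1}*`. -/
theorem POFU_mixing_probability
    (pm ps k h μ : ℝ) (hpm : 0 < pm) (hps : pm < ps) (hk : 0 < k)
    (hh : h ∈ Set.Ioo (0 : ℝ) 1) (hμ : μ ∈ Set.Ioo (0 : ℝ) 1)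
    (hhk : h * (ps - pm) > k)
    (hμ2 : μ > h * k / (h * k + (1 - h) * (h * (ps - pm) - k))) :
    (h < 1 - (1 - μ) * h * k / (μ * (h * (ps - pm) - k)) ∧
      1 - (1 - μ) * h * k / (μ * (h * (ps - pm) - k)) < 1) ∧
    k * ((1 - μ) * h +
        μ * (1 - (1 - (1 - μ) * h * k / (μ * (h * (ps - pm) - k))))) =
      μ * (1 - (1 - (1 - μ) * h * k / (μ * (h * (ps - pm) - k)))) *
        h * (ps - pm) ∧
    (0 < 1 - (1 - μ) * h * k / (μ * (1 - h) * (h * (ps - pm) - k)) ∧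
      1 - (1 - μ) * h * k / (μ * (1 - h) * (h * (ps - pm) - k)) < 1 ∧
      1 - (1 - μ) * h * k / (μ * (h * (ps - pm) - k)) =
        h + (1 - h) *
          (1 - (1 - μ) * h * k / (μ * (1 - h) * (h * (ps - pm) - k)))) := by
  obtain ⟨hh0, hh1⟩ := hh
  obtain ⟨hμ0, hμ1⟩ := hμ
  have hD : 0 < h * (ps - pm) - k := by linarith
  have h1h : 0 < 1 - h := by linarith
  have h1μ : 0 < 1 - μ := by linarith
  have hden : 0 < h * k + (1 - h) * (h * (ps - pm) - k) := by positivity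
  have hμ2' : h * k < μ * (h * k + (1 - h) * (h * (ps - pm) - k)) := by
    rw [gt_iff_lt, div_lt_iff₀ hden] at hμ2
    linarith
  have key : (1 - μ) * h * k < μ * (1 - h) * (h * (ps - pm) - k) := by nlinarith
  refine ⟨⟨?_, ?_⟩, ?_, ?_, ?_, ?_⟩
  · have : (1 - μ) * h * k / (μ * (h * (ps - pm) - k)) < 1 - h := by
      rw [div_lt_iff₀ (by positivity)]
      nlinarith
    linarith
  · have : 0 < (1 - μ) * h * k / (μ * (h * (ps - pm) - k)) := by positivity
    linarith
  · field_simp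
    ring
  · rw [sub_pos, div_lt_one (by positivity)]
    linarith
  · have : 0 < (1 - μ) * h * k / (μ * (1 - h) * (h * (ps - pm) - k)) := by positivity
    linarith
  · field_simp
    ring
end

section
/- Let p_m < p_s, 0 ≤ k′ < k < p_m + k′, h ∈ (0,1), and let μ ∈ (0,1) satisfy μ < μ₁* := (1−h)(p_m+k′−k)/(hk + (1−h)h(p_s−p_m) + (1−h)(p_m+k′−k)). Define T̄_s := 1 − μh((1−h)(p_s−p_m)+k)/((1−μ)(p_m+k′−k)). Then: (i) h < T̄_s < 1; (ii) T̄_s solves the indifference equation μ·h·((1−h)(p_s−p_m)+k) = (1−μ)·(1−T̄_s)·(p_m+k′−k); and (iii) T_{s1}* := 1 − μh((1−h)(p_s−p_m)+k)/((1−μ)(1−h)(p_m+k′−k)) lies in (0,1) and satisfies T̄_s = h + (1−h)·T_{s1}*. (This verifies the full-overtreatment/partial-undertreatment (FOPU) equilibrium mixing probability of Proposition 1(iii).) -/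
/-- Verification of the FOPU-equilibrium mixing probability (Proposition 1(iii)):
when `μ < μ₁*`, the expected truthful-serious probability
`T̄_s = 1 − μh((1−h)(p_s−p_m)+k)/((1−μ)(p_m+k′−k))` lies in `(h,1)`, solves the
consumer's indifference equation, and corresponds to an opportunistic strategy
`T_{s1}* ∈ (0,1)` via `T̄_s = h + (1−h)T_{s1}*`. -/
theorem FOPU_mixing_probability
    (pm ps k k' h μ : ℝ) (hpm : 0 < pm) (hps : pm < ps)
    (hk' : 0 ≤ k') (hkk : k' < k) (hkp : k < pm + k')
    (hh : h ∈ Set.Ioo (0 : ℝ) 1) (hμ : μ ∈ Set.Ioo (0 : ℝ) 1)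
    (hμ1 : μ < (1 - h) * (pm + k' - k) /
        (h * k + (1 - h) * h * (ps - pm) + (1 - h) * (pm + k' - k))) :
    (h < 1 - μ * h * ((1 - h) * (ps - pm) + k) / ((1 - μ) * (pm + k' - k)) ∧
      1 - μ * h * ((1 - h) * (ps - pm) + k) / ((1 - μ) * (pm + k' - k)) < 1) ∧
    μ * h * ((1 - h) * (ps - pm) + k) =
      (1 - μ) *
        (1 - (1 - μ * h * ((1 - h) * (ps - pm) + k) /
          ((1 - μ) * (pm + k' - k)))) * (pm + k' - k) ∧
    (0 < 1 - μ * h * ((1 - h) * (ps - pm) + k) /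
        ((1 - μ) * (1 - h) * (pm + k' - k)) ∧
      1 - μ * h * ((1 - h) * (ps - pm) + k) /
        ((1 - μ) * (1 - h) * (pm + k' - k)) < 1 ∧
      1 - μ * h * ((1 - h) * (ps - pm) + k) / ((1 - μ) * (pm + k' - k)) =
        h + (1 - h) *
          (1 - μ * h * ((1 - h) * (ps - pm) + k) /
            ((1 - μ) * (1 - h) * (pm + k' - k)))) := by
  obtain ⟨hh0, hh1⟩ := hh
  obtain ⟨hμ0, hμ1'⟩ := hμ
  have hD : 0 < pm + k' - k := by linarith
  have hN : 0 < (1 - h) * (ps - pm) + k := by nlinarith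
  have h1μ : 0 < 1 - μ := by linarith
  have h1h : 0 < 1 - h := by linarith
  have hB : 0 < h * k + (1 - h) * h * (ps - pm) + (1 - h) * (pm + k' - k) := by nlinarith
  have key : μ * h * ((1 - h) * (ps - pm) + k) < (1 - μ) * (1 - h) * (pm + k' - k) := by
    have := (lt_div_iff₀ hB).1 hμ1
    nlinarith
  have hb1 : (0:ℝ) < (1 - μ) * (pm + k' - k) := by positivity
  have hb2 : (0:ℝ) < (1 - μ) * (1 - h) * (pm + k' - k) := by positivity
  have hnum : 0 < μ * h * ((1 - h) * (ps - pm) + k) := by positivity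
  refine ⟨⟨?_, ?_⟩, ?_, ?_, ?_, ?_⟩
  · have : μ * h * ((1 - h) * (ps - pm) + k) / ((1 - μ) * (pm + k' - k)) < 1 - h := by
      rw [div_lt_iff₀ hb1]; nlinarith
    linarith
  · have : 0 < μ * h * ((1 - h) * (ps - pm) + k) / ((1 - μ) * (pm + k' - k)) :=
      div_pos hnum hb1
    linarith
  · field_simp
    ring
  · have : μ * h * ((1 - h) * (ps - pm) + k) / ((1 - μ) * (1 - h) * (pm + k' - k)) < 1 := by
      rw [div_lt_one hb2]; nlinarith
    linarith
  · have : 0 < μ * h * ((1 - h) * (ps - pm) + k) / ((1 - μ) * (1 - h) * (pm + k' - k)) :=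
      div_pos hnum hb2
    linarith
  · field_simp
    ring
end

section
/- Let p_m < p_s, k′ ≥ 0 and h ∈ (0,1) be real numbers. Then the function k ↦ (1−h)(p_m+k′−k)/(h k + (1−h)h(p_s−p_m) + (1−h)(p_m+k′−k)) is strictly decreasing on the interval (0, p_m + k′): for all 0 < k₁ < k₂ < p_m + k′, the value at k₂ is strictly smaller than the value at k₁. (Corollary 1(i): the lower boundary μ₁* of the full overtreatment/full undertreatment region decreases with the search cost k.) -/
/-- Corollary 1(i): the lower FOFU boundary
`μ₁*(k) = (1−h)(p_m+k′−k)/(hk + (1−h)h(p_s−p_m) + (1−h)(p_m+k′−k))`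
is strictly decreasing in the search cost `k` on `(0, p_m + k′)`. -/
theorem mu1_strictAnti_in_k
    (pm ps k' h : ℝ) (hpm : 0 < pm) (hps : pm < ps) (hk' : 0 ≤ k')
    (hh : h ∈ Set.Ioo (0 : ℝ) 1)
    (k₁ k₂ : ℝ) (hk1 : 0 < k₁) (h12 : k₁ < k₂) (hk2 : k₂ < pm + k') :
    (1 - h) * (pm + k' - k₂) /
        (h * k₂ + (1 - h) * h * (ps - pm) + (1 - h) * (pm + k' - k₂)) <
      (1 - h) * (pm + k' - k₁) /
        (h * k₁ + (1 - h) * h * (ps - pm) + (1 - h) * (pm + k' - k₁)) := by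
  obtain ⟨h0, h1⟩ := hh
  have hD2 : 0 < h * k₂ + (1 - h) * h * (ps - pm) + (1 - h) * (pm + k' - k₂) := by
    have := mul_pos h0 (hk1.trans h12)
    have := mul_pos (mul_pos (sub_pos.2 (show h<1 from h1)) h0) (sub_pos.2 hps)
    have := mul_pos (sub_pos.2 (show h<1 from h1)) (sub_pos.2 hk2)
    linarith
  have hD1 : 0 < h * k₁ + (1 - h) * h * (ps - pm) + (1 - h) * (pm + k' - k₁) := by
    have := mul_pos h0 hk1
    have := mul_pos (mul_pos (sub_pos.2 (show h<1 from h1)) h0) (sub_pos.2 hps)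
    have := mul_pos (sub_pos.2 (show h<1 from h1)) (sub_pos.2 (h12.trans hk2))
    linarith
  rw [div_lt_div_iff₀ hD2 hD1]
  nlinarith [mul_pos (mul_pos h0 (sub_pos.2 h1)) (sub_pos.2 h12),
    mul_pos (sub_pos.2 h1) (sub_pos.2 hps)]
end

section
/- Let p_m < p_s, k′ ≥ 0, h ∈ (0,1) and μ ∈ (0,1) be real numbers. Then the function k ↦ 1 − μh((1−h)(p_s−p_m)+k) / ((1−μ)(1−h)(p_m+k′−k)) is strictly decreasing on the interval (0, p_m + k′): for all 0 < k₁ < k₂ < p_m + k′, the value at k₂ is strictly smaller than the value at k₁. (Corollary 1(i): in the FOPU equilibrium, the opportunistic expert's probability T_{s1}* of a truthful serious recommendation decreases with the search cost k, i.e. undertreatment becomes more likely.) -/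
/-- Corollary 1(i): in the FOPU equilibrium, the truthful-serious probability
`T_{s1}*(k) = 1 − μh((1−h)(p_s−p_m)+k)/((1−μ)(1−h)(p_m+k′−k))` is strictly
decreasing in the search cost `k` on `(0, p_m + k')`. -/
theorem Ts1_strictAnti_in_k
    (pm ps k' h μ : ℝ) (hpm : 0 < pm) (hps : pm < ps) (hk' : 0 ≤ k')
    (hh : h ∈ Set.Ioo (0 : ℝ) 1) (hμ : μ ∈ Set.Ioo (0 : ℝ) 1)
    (k₁ k₂ : ℝ) (hk1 : 0 < k₁) (h12 : k₁ < k₂) (hk2 : k₂ < pm + k') :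
    1 - μ * h * ((1 - h) * (ps - pm) + k₂) /
        ((1 - μ) * (1 - h) * (pm + k' - k₂)) <
      1 - μ * h * ((1 - h) * (ps - pm) + k₁) /
        ((1 - μ) * (1 - h) * (pm + k' - k₁)) := by
  obtain ⟨hh0, hh1⟩ := hh
  obtain ⟨hμ0, hμ1⟩ := hμ
  apply sub_lt_sub_left
  have hd1 : 0 < (1 - μ) * (1 - h) * (pm + k' - k₁) := by
    apply mul_pos (mul_pos (by linarith) (by linarith)); linarith
  have hd2 : 0 < (1 - μ) * (1 - h) * (pm + k' - k₂) := by
    apply mul_pos (mul_pos (by linarith) (by linarith)); linarith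
  rw [div_lt_div_iff₀ hd1 hd2]
  have key : 0 < (μ * h * ((1 - μ) * (1 - h))) * ((k₂ - k₁) * ((1 - h) * (ps - pm) + (pm + k'))) := by
    apply mul_pos (mul_pos (mul_pos hμ0 hh0) (mul_pos (by linarith) (by linarith)))
    apply mul_pos (by linarith)
    have : 0 < (1 - h) * (ps - pm) := mul_pos (by linarith) (by linarith)
    linarith
  nlinarith [key]
end

section
/- Let p_m < p_s and 0 < k < p_s − p_m be real numbers, and set h* := √(k/(p_s−p_m)) and μ₃* := k / (p_s − p_m + 2k − 2√(k(p_s−p_m))). Then h* ∈ (k/(p_s−p_m), 1), the denominator p_s − p_m + 2k − 2√(k(p_s−p_m)) is strictly positive, and for every h with k/(p_s−p_m) < h < 1 the value μ₂*(h) := h k / (h k + (1−h)(h(p_s−p_m) − k)) satisfies μ₂*(h) ≥ μ₃*, with equality if and only if h = h*. (This is the minimization of μ₂* over h used in the proof of Proposition 2.) -/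
/-! Put `d = p_s − p_m` and `s = √(k/d)`, so that `k = d s²` and `√(k d) = s d`. Then the
denominator of `μ₃*` is `d (1 − s)² + k > 0`, and with `N(h) = h k + (1 − h)(h d − k)` one has
`h · (d + 2k − 2√(k d)) − N(h) = d (h − s)²`. Hence `μ₂*(h) − μ₃*` is `k d (h − s)²` divided by a
product of two positive denominators: it is nonnegative and vanishes exactly at `h = s`. -/

open Real

noncomputable section

namespace Minimization

def mu2Denom (d k h : ℝ) : ℝ := h * k + (1 - h) * (h * d - k)

def mu2Star (d k h : ℝ) : ℝ := h * k / mu2Denom d k h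

def mu3Denom (d k : ℝ) : ℝ := d + 2 * k - 2 * √(k * d)

def mu3Star (d k : ℝ) : ℝ := k / mu3Denom d k

variable {d k h : ℝ}

theorem lt_sqrt_self_and_sqrt_lt_one {t : ℝ} (ht0 : 0 < t) (ht1 : t < 1) :
    t < √t ∧ √t < 1 :=
  ⟨(lt_sqrt ht0.le).2 (by nlinarith), (sqrt_lt' one_pos).2 (by rwa [one_pow])⟩

theorem sq_sqrt_div_mul (hd : 0 < d) (hk : 0 ≤ k) : √(k / d) ^ 2 * d = k := by
  rw [sq_sqrt (div_nonneg hk hd.le), div_mul_cancel₀ k hd.ne']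

theorem sqrt_mul_eq_sqrt_div_mul (hd : 0 ≤ d) : √(k * d) = √(k / d) * d := by
  rcases hd.eq_or_lt with rfl | hd
  · simp
  rw [← sqrt_sq hd.le, ← sqrt_mul', sqrt_sq hd.le]
  · congr 1; field_simp
  · positivity

theorem mu3Denom_eq (hd : 0 < d) (hk : 0 ≤ k) : mu3Denom d k = d * (1 - √(k / d)) ^ 2 + k := by
  rw [mu3Denom, sqrt_mul_eq_sqrt_div_mul hd.le]
  linear_combination -sq_sqrt_div_mul hd hk

theorem mu3Denom_pos (hd : 0 < d) (hk : 0 < k) : 0 < mu3Denom d k := by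
  rw [mu3Denom_eq hd hk.le]
  positivity

theorem mu2Denom_pos (hd : 0 < d) (hk : 0 < k) (hkh : k / d < h) (h1 : h < 1) :
    0 < mu2Denom d k h := by
  have hh : 0 < h := (div_pos hk hd).trans hkh
  have : 0 < h * d - k := by rw [div_lt_iff₀ hd] at hkh; linarith
  have : 0 < 1 - h := by linarith
  rw [mu2Denom]
  positivity

theorem mul_mu3Denom_sub_mu2Denom (hd : 0 < d) (hk : 0 ≤ k) :
    h * mu3Denom d k - mu2Denom d k h = d * (h - √(k / d)) ^ 2 := by
  rw [mu3Denom_eq hd hk, mu2Denom]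
  linear_combination (h - 1) * sq_sqrt_div_mul hd hk

theorem mu2Star_sub_mu3Star (hd : 0 < d) (hk : 0 ≤ k) (hN : 0 < mu2Denom d k h)
    (hD : 0 < mu3Denom d k) :
    mu2Star d k h - mu3Star d k =
      k * d * (h - √(k / d)) ^ 2 / (mu2Denom d k h * mu3Denom d k) := by
  rw [mu2Star, mu3Star, div_sub_div _ _ hN.ne' hD.ne', mul_assoc k,
    ← mul_mu3Denom_sub_mu2Denom hd hk]
  ring

theorem mu3Star_le_mu2Star (hd : 0 < d) (hk : 0 < k) (hkh : k / d < h) (h1 : h < 1) :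
    mu3Star d k ≤ mu2Star d k h := by
  have hN := mu2Denom_pos hd hk hkh h1
  have hD := mu3Denom_pos hd hk
  rw [← sub_nonneg, mu2Star_sub_mu3Star hd hk.le hN hD]
  positivity

theorem mu2Star_eq_mu3Star_iff (hd : 0 < d) (hk : 0 < k) (hkh : k / d < h) (h1 : h < 1) :
    mu2Star d k h = mu3Star d k ↔ h = √(k / d) := by
  have hN := mu2Denom_pos hd hk hkh h1
  have hD := mu3Denom_pos hd hk
  rw [← sub_eq_zero, mu2Star_sub_mu3Star hd hk.le hN hD, ← sub_eq_zero (a := h)]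
  simp [hk.ne', hd.ne', hN.ne', hD.ne']

end Minimization

open Minimization in
theorem mu2_minimized_at_hstar_general
    (pm ps k : ℝ) (hk : 0 < k)
    (hkp : k < ps - pm) :
    (k / (ps - pm) < Real.sqrt (k / (ps - pm)) ∧
      Real.sqrt (k / (ps - pm)) < 1) ∧
    0 < ps - pm + 2 * k - 2 * Real.sqrt (k * (ps - pm)) ∧
    ∀ h : ℝ, k / (ps - pm) < h → h < 1 →
      (k / (ps - pm + 2 * k - 2 * Real.sqrt (k * (ps - pm))) ≤
        h * k / (h * k + (1 - h) * (h * (ps - pm) - k)) ∧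
      (h * k / (h * k + (1 - h) * (h * (ps - pm) - k)) =
          k / (ps - pm + 2 * k - 2 * Real.sqrt (k * (ps - pm))) ↔
        h = Real.sqrt (k / (ps - pm)))) := by
  have hd : 0 < ps - pm := hk.trans hkp
  refine ⟨lt_sqrt_self_and_sqrt_lt_one (div_pos hk hd) ((div_lt_one hd).2 hkp),
    mu3Denom_pos hd hk, fun h hkh h1 =>
      ⟨mu3Star_le_mu2Star hd hk hkh h1, mu2Star_eq_mu3Star_iff hd hk hkh h1⟩⟩

/-- Minimization of `μ₂*` over `h` (used in the proof of Proposition 2):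
with `h* = √(k/(p_s−p_m))` and
`μ₃* = k/(p_s−p_m+2k−2√(k(p_s−p_m)))`, we have `h* ∈ (k/(p_s−p_m), 1)`, the
denominator of `μ₃*` is positive, and for all `h ∈ (k/(p_s−p_m), 1)` the value
`μ₂*(h)` is at least `μ₃*`, with equality iff `h = h*`. -/
theorem mu2_minimized_at_hstar
    (pm ps k : ℝ) (hpm : 0 < pm) (hps : pm < ps) (hk : 0 < k)
    (hkp : k < ps - pm) :
    (k / (ps - pm) < Real.sqrt (k / (ps - pm)) ∧
      Real.sqrt (k / (ps - pm)) < 1) ∧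
    0 < ps - pm + 2 * k - 2 * Real.sqrt (k * (ps - pm)) ∧
    ∀ h : ℝ, k / (ps - pm) < h → h < 1 →
      (k / (ps - pm + 2 * k - 2 * Real.sqrt (k * (ps - pm))) ≤
        h * k / (h * k + (1 - h) * (h * (ps - pm) - k)) ∧
      (h * k / (h * k + (1 - h) * (h * (ps - pm) - k)) =
          k / (ps - pm + 2 * k - 2 * Real.sqrt (k * (ps - pm))) ↔
        h = Real.sqrt (k / (ps - pm)))) :=
  mu2_minimized_at_hstar_general pm ps k hk hkp
end
end

section
/- Let p_m < p_s and 0 ≤ k′ < k < p_m + k′ be real numbers. Then the function μ₁*(h) := (1−h)(p_m+k′−k)/(h k + (1−h)h(p_s−p_m) + (1−h)(p_m+k′−k)) is strictly decreasing in h on [0,1], with μ₁*(0) = 1 and μ₁*(1) = 0. (Used in the proof of Proposition 2: as the ethical level h of the market increases, the lower boundary of the FOFU region sweeps from 1 down to 0.) -/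
/-!
Clearing the (positive) denominators `D h = h k + (1 - h) h s + (1 - h) c`, the comparison of
the values at `a < b` reduces to the polynomial identity
`(1 - a) D b - (1 - b) D a = (b - a) (k + (1 - a) (1 - b) s)`, whose right-hand side is positive.
-/

open Set

section FofuBoundary

variable {k s c : ℝ}

theorem fofuDenom_pos (hk : 0 < k) (hs : 0 ≤ s) (hc : 0 < c) {h : ℝ} (hh : h ∈ Icc (0 : ℝ) 1) :
    0 < h * k + (1 - h) * h * s + (1 - h) * c := by
  obtain ⟨h0, h1⟩ := hh
  have hrest : 0 ≤ (1 - h) * h * s := by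
    have : 0 ≤ 1 - h := by linarith
    positivity
  rcases h0.eq_or_lt with rfl | hpos
  · simpa using hc
  · have : 0 ≤ (1 - h) * c := mul_nonneg (by linarith) hc.le
    have : 0 < h * k := mul_pos hpos hk
    linarith

theorem one_sub_mul_fofuDenom_sub (a b : ℝ) :
    (1 - a) * (b * k + (1 - b) * b * s + (1 - b) * c)
      - (1 - b) * (a * k + (1 - a) * a * s + (1 - a) * c)
      = (b - a) * (k + (1 - a) * (1 - b) * s) := by
  ring

theorem strictAntiOn_fofuBoundary (hk : 0 < k) (hs : 0 ≤ s) (hc : 0 < c) :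
    StrictAntiOn (fun h : ℝ => (1 - h) * c / (h * k + (1 - h) * h * s + (1 - h) * c))
      (Icc (0 : ℝ) 1) := by
  intro a ha b hb hab
  rw [div_lt_div_iff₀ (fofuDenom_pos hk hs hc hb) (fofuDenom_pos hk hs hc ha)]
  have hgap : 0 < (b - a) * (k + (1 - a) * (1 - b) * s) := by
    have : 0 ≤ (1 - a) * (1 - b) * s :=
      mul_nonneg (mul_nonneg (by linarith [ha.2]) (by linarith [hb.2])) hs
    exact mul_pos (by linarith) (by linarith)
  have := mul_pos hc hgap
  linear_combination this + c * one_sub_mul_fofuDenom_sub (k := k) (s := s) (c := c) a b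

end FofuBoundary

theorem mu1_strictAnti_in_h_general
    (pm ps k k' : ℝ) (hps : pm < ps)
    (hk' : 0 ≤ k') (hkk : k' < k) (hkp : k < pm + k') :
    StrictAntiOn
      (fun h : ℝ => (1 - h) * (pm + k' - k) /
        (h * k + (1 - h) * h * (ps - pm) + (1 - h) * (pm + k' - k)))
      (Set.Icc (0 : ℝ) 1) ∧
    (1 - (0:ℝ)) * (pm + k' - k) /
        ((0:ℝ) * k + (1 - (0:ℝ)) * (0:ℝ) * (ps - pm) +
          (1 - (0:ℝ)) * (pm + k' - k)) = 1 ∧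
    (1 - (1:ℝ)) * (pm + k' - k) /
        ((1:ℝ) * k + (1 - (1:ℝ)) * (1:ℝ) * (ps - pm) +
          (1 - (1:ℝ)) * (pm + k' - k)) = 0 := by
  have hc : 0 < pm + k' - k := by linarith
  exact ⟨strictAntiOn_fofuBoundary (by linarith) (by linarith) hc, by norm_num [hc.ne'], by norm_num⟩

/-- Used in the proof of Proposition 2: the lower FOFU boundary
`μ₁*(h) = (1−h)(p_m+k′−k)/(hk + (1−h)h(p_s−p_m) + (1−h)(p_m+k′−k))`
is strictly decreasing in `h` on `[0,1]`, with `μ₁*(0) = 1` and `μ₁*(1) = 0`. -/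
theorem mu1_strictAnti_in_h
    (pm ps k k' : ℝ) (hpm : 0 < pm) (hps : pm < ps)
    (hk' : 0 ≤ k') (hkk : k' < k) (hkp : k < pm + k') :
    StrictAntiOn
      (fun h : ℝ => (1 - h) * (pm + k' - k) /
        (h * k + (1 - h) * h * (ps - pm) + (1 - h) * (pm + k' - k)))
      (Set.Icc (0 : ℝ) 1) ∧
    (1 - (0:ℝ)) * (pm + k' - k) /
        ((0:ℝ) * k + (1 - (0:ℝ)) * (0:ℝ) * (ps - pm) +
          (1 - (0:ℝ)) * (pm + k' - k)) = 1 ∧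
    (1 - (1:ℝ)) * (pm + k' - k) /
        ((1:ℝ) * k + (1 - (1:ℝ)) * (1:ℝ) * (ps - pm) +
          (1 - (1:ℝ)) * (pm + k' - k)) = 0 :=
  mu1_strictAnti_in_h_general pm ps k k' hps hk' hkk hkp
end

section
/- Let p_m < p_s, 0 ≤ k′ < k < p_m + k′ and μ ∈ (0,1) be real numbers. Define, for h ∈ (0,1), T̄_s(h) := 1 − μh((1−h)(p_s−p_m)+k)/((1−μ)(p_m+k′−k)) and f(h) := −μ(1−h)(p_s+k) − (1−μ)T̄_s(h)(p_s+k) − μh(p_m+k) − (1−μ)(1−T̄_s(h))(p_m+p_s+k+k′). Then for every h ∈ (0,1) the function f is differentiable at h with derivative f′(h) = μ·(2h(p_s−p_m)(p_m+k′) − k(p_s+k′)) / (p_m+k′−k). Consequently, setting h₂* := k(p_s+k′)/(2(p_s−p_m)(p_m+k′)), f′(h) < 0 for h < h₂* and f′(h) > 0 for h > h₂*. (Proposition 4: in the FOPU equilibrium, consumer welfare is decreasing in the ethical level h of the market when h is below h₂* and increasing above it.) -/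
/-- Proposition 4 (FOPU welfare in `h`): consumer welfare in the FOPU
equilibrium is differentiable in the ethical level `h` with derivative
`μ(2h(p_s−p_m)(p_m+k′) − k(p_s+k′))/(p_m+k′−k)`, which is negative for
`h < h₂* = k(p_s+k′)/(2(p_s−p_m)(p_m+k′))` and positive for `h > h₂*`. -/
theorem FOPU_welfare_derivative_in_h
    (pm ps k k' μ : ℝ) (hpm : 0 < pm) (hps : pm < ps) (hk' : 0 ≤ k')
    (hkk : k' < k) (hkp : k < pm + k') (hμ : μ ∈ Set.Ioo (0 : ℝ) 1) :
    ∀ h ∈ Set.Ioo (0 : ℝ) 1,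
      HasDerivAt (fun h : ℝ =>
          -μ * (1 - h) * (ps + k)
          - (1 - μ) * (1 - μ * h * ((1 - h) * (ps - pm) + k) /
              ((1 - μ) * (pm + k' - k))) * (ps + k)
          - μ * h * (pm + k)
          - (1 - μ) * (1 - (1 - μ * h * ((1 - h) * (ps - pm) + k) /
              ((1 - μ) * (pm + k' - k)))) * (pm + ps + k + k'))
        (μ * (2 * h * (ps - pm) * (pm + k') - k * (ps + k')) /
          (pm + k' - k)) h ∧
      (h < k * (ps + k') / (2 * (ps - pm) * (pm + k')) →
        μ * (2 * h * (ps - pm) * (pm + k') - k * (ps + k')) /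
          (pm + k' - k) < 0) ∧
      (k * (ps + k') / (2 * (ps - pm) * (pm + k')) < h →
        0 < μ * (2 * h * (ps - pm) * (pm + k') - k * (ps + k')) /
          (pm + k' - k)) := by
  obtain ⟨hμ0, hμ1⟩ := hμ
  have hD0 : (0:ℝ) < pm + k' - k := by linarith
  have hD0' : pm + k' - k ≠ 0 := ne_of_gt hD0
  have h1μ : (1:ℝ) - μ ≠ 0 := by intro hc; nlinarith
  have hden : (0:ℝ) < 2 * (ps - pm) * (pm + k') := by nlinarith
  intro h hh
  set a := μ * (ps - pm) * (pm + k') / (pm + k' - k) with ha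
  set b := -(μ * k * (ps + k')) / (pm + k' - k) with hb
  refine ⟨?_, ?_, ?_⟩
  · have heq : (fun h : ℝ =>
          -μ * (1 - h) * (ps + k)
          - (1 - μ) * (1 - μ * h * ((1 - h) * (ps - pm) + k) /
              ((1 - μ) * (pm + k' - k))) * (ps + k)
          - μ * h * (pm + k)
          - (1 - μ) * (1 - (1 - μ * h * ((1 - h) * (ps - pm) + k) /
              ((1 - μ) * (pm + k' - k)))) * (pm + ps + k + k'))
        = (fun h : ℝ => a * h ^ 2 + b * h + -(ps + k)) := by
      funext x
      rw [ha, hb]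
      field_simp
      ring
    rw [heq]
    have hq : HasDerivAt (fun h : ℝ => a * h ^ 2 + b * h + -(ps + k))
        (a * (2 * h) + b) h := by
      have := (((hasDerivAt_pow 2 h).const_mul a).add
        ((hasDerivAt_id h).const_mul b)).add_const (-(ps + k))
      simpa [mul_comm, mul_assoc] using this
    convert hq using 1
    rw [ha, hb]
    field_simp
    ring
  · intro hlt
    have h2 : 2 * h * (ps - pm) * (pm + k') < k * (ps + k') := by
      rw [lt_div_iff₀ hden] at hlt; nlinarith
    have : μ * (2 * h * (ps - pm) * (pm + k') - k * (ps + k')) < 0 := by nlinarith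
    exact div_neg_of_neg_of_pos this hD0
  · intro hlt
    have h2 : k * (ps + k') < 2 * h * (ps - pm) * (pm + k') := by
      rw [div_lt_iff₀ hden] at hlt; nlinarith
    have : 0 < μ * (2 * h * (ps - pm) * (pm + k') - k * (ps + k')) := by nlinarith
    exact div_pos this hD0
end

section
/- Let p_m < p_s, 0 ≤ k′ < k < p_m + k′ and h ∈ (0,1) be real numbers. Define, for μ ∈ (0,1), T̄_s(μ) := 1 − μh((1−h)(p_s−p_m)+k)/((1−μ)(p_m+k′−k)) and g(μ) := −μ(1−h)(p_s+k) − (1−μ)T̄_s(μ)(p_s+k) − μh(p_m+k) − (1−μ)(1−T̄_s(μ))(p_m+p_s+k+k′). Then g is an affine function of μ whose derivative at every μ ∈ (0,1) equals h·(h(p_s−p_m)(p_m+k′) − k(p_s+k′)) / (p_m+k′−k). Consequently, setting h₃* := k(p_s+k′)/((p_s−p_m)(p_m+k′)), g is strictly decreasing in μ if h < h₃* and strictly increasing in μ if h > h₃*. (Proposition 5: in the FOPU equilibrium, consumer welfare decreases with the prior probability μ of a minor problem exactly when the market's ethical level h is below h₃*.) -/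
/-- Proposition 5 (FOPU welfare in `μ`): consumer welfare in the FOPU
equilibrium is an affine function of the prior `μ` on `(0,1)`, with constant
derivative `h(h(p_s−p_m)(p_m+k′) − k(p_s+k′))/(p_m+k′−k)`; it is strictly
decreasing in `μ` when `h < h₃* = k(p_s+k′)/((p_s−p_m)(p_m+k′))` and strictly
increasing when `h > h₃*`. -/
theorem FOPU_welfare_in_mu
    (pm ps k k' h : ℝ) (hpm : 0 < pm) (hps : pm < ps) (hk' : 0 ≤ k')
    (hkk : k' < k) (hkp : k < pm + k') (hh : h ∈ Set.Ioo (0 : ℝ) 1) :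
    (∀ μ ∈ Set.Ioo (0 : ℝ) 1,
      HasDerivAt (fun μ : ℝ =>
          -μ * (1 - h) * (ps + k)
          - (1 - μ) * (1 - μ * h * ((1 - h) * (ps - pm) + k) /
              ((1 - μ) * (pm + k' - k))) * (ps + k)
          - μ * h * (pm + k)
          - (1 - μ) * (1 - (1 - μ * h * ((1 - h) * (ps - pm) + k) /
              ((1 - μ) * (pm + k' - k)))) * (pm + ps + k + k'))
        (h * (h * (ps - pm) * (pm + k') - k * (ps + k')) / (pm + k' - k)) μ) ∧
    (∃ c : ℝ, ∀ μ ∈ Set.Ioo (0 : ℝ) 1,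
      (-μ * (1 - h) * (ps + k)
          - (1 - μ) * (1 - μ * h * ((1 - h) * (ps - pm) + k) /
              ((1 - μ) * (pm + k' - k))) * (ps + k)
          - μ * h * (pm + k)
          - (1 - μ) * (1 - (1 - μ * h * ((1 - h) * (ps - pm) + k) /
              ((1 - μ) * (pm + k' - k)))) * (pm + ps + k + k')) =
        (h * (h * (ps - pm) * (pm + k') - k * (ps + k')) / (pm + k' - k)) * μ
          + c) ∧
    (h < k * (ps + k') / ((ps - pm) * (pm + k')) →
      StrictAntiOn (fun μ : ℝ =>
          -μ * (1 - h) * (ps + k)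
          - (1 - μ) * (1 - μ * h * ((1 - h) * (ps - pm) + k) /
              ((1 - μ) * (pm + k' - k))) * (ps + k)
          - μ * h * (pm + k)
          - (1 - μ) * (1 - (1 - μ * h * ((1 - h) * (ps - pm) + k) /
              ((1 - μ) * (pm + k' - k)))) * (pm + ps + k + k'))
        (Set.Ioo (0 : ℝ) 1)) ∧
    (k * (ps + k') / ((ps - pm) * (pm + k')) < h →
      StrictMonoOn (fun μ : ℝ =>
          -μ * (1 - h) * (ps + k)
          - (1 - μ) * (1 - μ * h * ((1 - h) * (ps - pm) + k) /
              ((1 - μ) * (pm + k' - k))) * (ps + k)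
          - μ * h * (pm + k)
          - (1 - μ) * (1 - (1 - μ * h * ((1 - h) * (ps - pm) + k) /
              ((1 - μ) * (pm + k' - k)))) * (pm + ps + k + k'))
        (Set.Ioo (0 : ℝ) 1)) := by
  set A : ℝ := h * (h * (ps - pm) * (pm + k') - k * (ps + k')) / (pm + k' - k)
    with hA
  have hD : (0:ℝ) < pm + k' - k := by linarith
  have key : ∀ μ ∈ Set.Ioo (0 : ℝ) 1,
      (-μ * (1 - h) * (ps + k)
          - (1 - μ) * (1 - μ * h * ((1 - h) * (ps - pm) + k) /
              ((1 - μ) * (pm + k' - k))) * (ps + k)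
          - μ * h * (pm + k)
          - (1 - μ) * (1 - (1 - μ * h * ((1 - h) * (ps - pm) + k) /
              ((1 - μ) * (pm + k' - k)))) * (pm + ps + k + k')) =
        A * μ + (-(ps + k)) := by
    intro μ hμ
    have h1 : (1:ℝ) - μ ≠ 0 := by have := hμ.2; intro hc; nlinarith
    have h2 : pm + k' - k ≠ 0 := ne_of_gt hD
    rw [hA]
    field_simp
    ring
  have hslope : ∀ hlt : h < k * (ps + k') / ((ps - pm) * (pm + k')), A < 0 := by
    intro hlt
    have hpos : (0:ℝ) < (ps - pm) * (pm + k') := by nlinarith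
    have : h * ((ps - pm) * (pm + k')) < k * (ps + k') :=
      (lt_div_iff₀ hpos).mp hlt
    rw [hA]
    apply div_neg_of_neg_of_pos _ hD
    nlinarith [hh.1]
  have hslope' : ∀ hgt : k * (ps + k') / ((ps - pm) * (pm + k')) < h, 0 < A := by
    intro hgt
    have hpos : (0:ℝ) < (ps - pm) * (pm + k') := by nlinarith
    have : k * (ps + k') < h * ((ps - pm) * (pm + k')) :=
      (div_lt_iff₀ hpos).mp hgt
    rw [hA]
    apply div_pos _ hD
    nlinarith [hh.1]
  refine ⟨?_, ⟨-(ps + k), key⟩, ?_, ?_⟩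
  · intro μ hμ
    have haff : HasDerivAt (fun μ : ℝ => A * μ + (-(ps + k))) A μ := by
      simpa using ((hasDerivAt_id μ).const_mul A).add_const (-(ps + k))
    apply haff.congr_of_eventuallyEq
    filter_upwards [isOpen_Ioo.mem_nhds hμ] with x hx
    exact key x hx
  · intro hlt x hx y hy hxy
    have hA0 := hslope hlt
    simp only [key x hx, key y hy]
    nlinarith
  · intro hgt x hx y hy hxy
    have hA0 := hslope' hgt
    simp only [key x hx, key y hy]
    nlinarith
end

section
/- Let p_m < p_s, k > 0, k′ ≥ 0 with p_m + k′ > 0, and define CW_FOFU(h, μ) := −μh(p_m+k) − μ(1−h)(p_s+k) − (1−μ)h(p_s+k) − (1−μ)(1−h)(p_m+p_s+k+k′). Then for each fixed μ ∈ (0,1) the map h ↦ CW_FOFU(h, μ) is strictly increasing on (0,1) with constant derivative μ(p_s−p_m) + (1−μ)(p_m+k′) > 0, and for each fixed h ∈ (0,1) the map μ ↦ CW_FOFU(h, μ) is strictly increasing on (0,1) with constant derivative h(p_s−p_m) + (1−h)(p_m+k′) > 0. (Used in Propositions 4 and 5: in the full overtreatment/full undertreatment equilibrium, consumer welfare increases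 in the market's ethical level h and in the prior probability μ of a minor problem.) -/
lemma linear_hasDerivAt (A B x : ℝ) :
    HasDerivAt (fun t : ℝ => A * t + B) A x := by
  simpa using ((hasDerivAt_id x).const_mul A).add_const B

/-- Propositions 4 and 5 (FOFU welfare): in the full-overtreatment /
full-undertreatment equilibrium, consumer welfare is strictly increasing both
in the ethical level `h` (with constant derivative
`μ(p_s−p_m) + (1−μ)(p_m+k′) > 0`) and in the prior probability `μ` of a minor
problem (with constant derivative `h(p_s−p_m) + (1−h)(p_m+k′) > 0`). -/
theorem FOFU_welfare_increasing
    (pm ps k k' : ℝ) (hpm : 0 < pm) (hps : pm < ps) (hk : 0 < k)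
    (hk' : 0 ≤ k') (hpk : 0 < pm + k') :
    (∀ μ ∈ Set.Ioo (0 : ℝ) 1,
      (∀ h : ℝ, HasDerivAt (fun h : ℝ =>
          -μ * h * (pm + k) - μ * (1 - h) * (ps + k) - (1 - μ) * h * (ps + k)
            - (1 - μ) * (1 - h) * (pm + ps + k + k'))
        (μ * (ps - pm) + (1 - μ) * (pm + k')) h) ∧
      0 < μ * (ps - pm) + (1 - μ) * (pm + k') ∧
      StrictMonoOn (fun h : ℝ =>
          -μ * h * (pm + k) - μ * (1 - h) * (ps + k) - (1 - μ) * h * (ps + k)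
            - (1 - μ) * (1 - h) * (pm + ps + k + k'))
        (Set.Ioo (0 : ℝ) 1)) ∧
    (∀ h ∈ Set.Ioo (0 : ℝ) 1,
      (∀ μ : ℝ, HasDerivAt (fun μ : ℝ =>
          -μ * h * (pm + k) - μ * (1 - h) * (ps + k) - (1 - μ) * h * (ps + k)
            - (1 - μ) * (1 - h) * (pm + ps + k + k'))
        (h * (ps - pm) + (1 - h) * (pm + k')) μ) ∧
      0 < h * (ps - pm) + (1 - h) * (pm + k') ∧
      StrictMonoOn (fun μ : ℝ =>
          -μ * h * (pm + k) - μ * (1 - h) * (ps + k) - (1 - μ) * h * (ps + k)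
            - (1 - μ) * (1 - h) * (pm + ps + k + k'))
        (Set.Ioo (0 : ℝ) 1)) := by
  constructor
  · rintro μ ⟨hμ0, hμ1⟩
    have hA : 0 < μ * (ps - pm) + (1 - μ) * (pm + k') := by nlinarith
    refine ⟨fun h => ?_, hA, ?_⟩
    · have heq : (fun h : ℝ =>
          -μ * h * (pm + k) - μ * (1 - h) * (ps + k) - (1 - μ) * h * (ps + k)
            - (1 - μ) * (1 - h) * (pm + ps + k + k'))
          = fun t : ℝ => (μ * (ps - pm) + (1 - μ) * (pm + k')) * t
              + (-μ * (ps + k) - (1 - μ) * (pm + ps + k + k')) := by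
        funext t; ring
      rw [heq]; exact linear_hasDerivAt _ _ _
    · intro x _ y _ hxy
      simp only
      nlinarith [mul_pos hA (sub_pos.mpr hxy)]
  · rintro h ⟨h0, h1⟩
    have hA : 0 < h * (ps - pm) + (1 - h) * (pm + k') := by nlinarith
    refine ⟨fun μ => ?_, hA, ?_⟩
    · have heq : (fun μ : ℝ =>
          -μ * h * (pm + k) - μ * (1 - h) * (ps + k) - (1 - μ) * h * (ps + k)
            - (1 - μ) * (1 - h) * (pm + ps + k + k'))
          = fun t : ℝ => (h * (ps - pm) + (1 - h) * (pm + k')) * t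
              + (-h * (ps + k) - (1 - h) * (pm + ps + k + k')) := by
        funext t; ring
      rw [heq]; exact linear_hasDerivAt _ _ _
    · intro x _ y _ hxy
      simp only
      nlinarith [mul_pos hA (sub_pos.mpr hxy)]
end
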